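/- arXiv:1607.08053 — 6 statements merged into one kernel-verified Lean document; each statement's English description precedes it below -/
import Mathlib

section
/- For every natural number n ≥ 0 and every positive integer d, one has 2n + 1 + Σ_{k=1}^{d-1} sin(kπ(2n+1)/d) / sin(kπ/d) = d·(2⌊n/d⌋ + 1), where ⌊x⌋ denotes the integer part (floor) of x. -/
open Real Finset

lemma cos_sum_lemma (d m : ℕ) (hd : 0 < d) :
    ∑ k ∈ Finset.range d, Real.cos (2 * Real.pi * m * k / d) =
      if d ∣ m then (d : ℝ) else 0 := by
  have hd' : (d : ℝ) ≠ 0 := Nat.cast_ne_zero.mpr hd.ne'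
  have hdC : (d : ℂ) ≠ 0 := Nat.cast_ne_zero.mpr hd.ne'
  set ζ : ℂ := Complex.exp ((2 * Real.pi * m / d : ℝ) * Complex.I) with hζ
  have key : ∀ k : ℕ, Real.cos (2 * Real.pi * m * k / d) = (ζ ^ k).re := by
    intro k
    rw [hζ, ← Complex.exp_nat_mul]
    have : (k : ℂ) * ((2 * Real.pi * m / d : ℝ) * Complex.I)
        = ((2 * Real.pi * m * k / d : ℝ) : ℂ) * Complex.I := by
      push_cast; ring
    rw [this, Complex.exp_ofReal_mul_I_re]
  simp_rw [key]
  rw [← Complex.re_sum]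
  by_cases hdvd : d ∣ m
  · obtain ⟨c, rfl⟩ := hdvd
    have hζ1 : ζ = 1 := by
      rw [hζ]
      have h1 : (2 * Real.pi * ((d * c : ℕ) : ℝ) / d) = (c : ℝ) * (2 * Real.pi) := by
        push_cast
        field_simp
      rw [h1]
      have h2 : (((c : ℝ) * (2 * Real.pi) : ℝ) : ℂ) * Complex.I
          = (c : ℤ) * (2 * Real.pi * Complex.I) := by push_cast; ring
      rw [h2, Complex.exp_int_mul_two_pi_mul_I]
    simp [hζ1, dvd_mul_right d c]
  · have hζd : ζ ^ d = 1 := by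
      rw [hζ, ← Complex.exp_nat_mul]
      have : (d : ℂ) * (((2 * Real.pi * m / d : ℝ) : ℂ) * Complex.I)
          = (m : ℤ) * (2 * Real.pi * Complex.I) := by
        push_cast
        field_simp
      rw [this, Complex.exp_int_mul_two_pi_mul_I]
    have hζ1 : ζ ≠ 1 := by
      intro h
      rw [hζ, Complex.exp_eq_one_iff] at h
      obtain ⟨z, hz⟩ := h
      apply hdvd
      have hI : ((2 * Real.pi * m / d : ℝ) : ℂ) = (z : ℂ) * (2 * Real.pi) := by
        apply mul_right_cancel₀ Complex.I_ne_zero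
        rw [hz]; ring
      have hre : (2 * Real.pi * m / d : ℝ) = z * (2 * Real.pi) := by
        exact_mod_cast hI
      have hmr : (m : ℝ) = z * d := by
        have h2 : 2 * Real.pi * (m : ℝ) = 2 * Real.pi * ((z : ℝ) * d) := by
          field_simp at hre; rw [hre]; ring
        exact mul_left_cancel₀ (by positivity) h2
      have hmz : (m : ℤ) = z * d := by exact_mod_cast hmr
      exact Int.natCast_dvd_natCast.mp ⟨z, by rw [hmz]; ring⟩
    rw [geom_sum_eq hζ1, hζd]
    simp [hdvd]

lemma sin_ne (d k : ℕ) (hk : k ∈ Finset.Ico 1 d) : Real.sin (k * Real.pi / d) ≠ 0 := by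
  rw [Finset.mem_Ico] at hk
  have hd : 0 < d := lt_of_le_of_lt (Nat.zero_le _) hk.2
  have h1 : (0 : ℝ) < k * Real.pi / d := by
    apply div_pos (mul_pos _ Real.pi_pos) (by exact_mod_cast hd)
    exact_mod_cast hk.1
  have h2 : k * Real.pi / d < Real.pi := by
    rw [div_lt_iff₀ (by exact_mod_cast hd)]
    have : (k : ℝ) < d := by exact_mod_cast hk.2
    nlinarith [Real.pi_pos]
  exact (Real.sin_pos_of_pos_of_lt_pi h1 h2).ne'

/-- For every natural number `n` and every positive integer `d`,
`2n + 1 + ∑_{k=1}^{d-1} sin(kπ(2n+1)/d) / sin(kπ/d) = d * (2⌊n/d⌋ + 1)`. -/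
theorem trig_identity_trivial_zeros (n d : ℕ) (hd : 0 < d) :
    (2 * n + 1 : ℝ) +
      ∑ k ∈ Finset.Ico 1 d,
        Real.sin (k * Real.pi * (2 * n + 1) / d) / Real.sin (k * Real.pi / d)
    = d * (2 * (n / d : ℕ) + 1) := by
  induction n with
  | zero =>
    have : ∀ k ∈ Finset.Ico 1 d,
        Real.sin (k * Real.pi * (2 * (0:ℕ) + 1) / d) / Real.sin (k * Real.pi / d) = 1 := by
      intro k hk
      rw [div_eq_one_iff_eq (sin_ne d k hk)]
      norm_num
    rw [Finset.sum_congr rfl this, Finset.sum_const, Nat.card_Ico]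
    simp [Nat.zero_div]
    push_cast [Nat.one_le_iff_ne_zero.mpr hd.ne']
    ring
  | succ n ih =>
    have hdR : (d : ℝ) ≠ 0 := Nat.cast_ne_zero.mpr hd.ne'
    have hstep : ∀ k ∈ Finset.Ico 1 d,
        Real.sin (k * Real.pi * (2 * (n+1:ℕ) + 1) / d) / Real.sin (k * Real.pi / d)
        = Real.sin (k * Real.pi * (2 * n + 1) / d) / Real.sin (k * Real.pi / d)
          + 2 * Real.cos (2 * Real.pi * (n+1:ℕ) * k / d) := by
      intro k hk
      have hs := sin_ne d k hk
      have h := Real.sin_sub_sin (k * Real.pi * (2 * (n+1:ℕ) + 1) / d)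
        (k * Real.pi * (2 * n + 1) / d)
      have e1 : (k * Real.pi * (2 * (n+1:ℕ) + 1) / d - k * Real.pi * (2 * n + 1) / d) / 2
          = k * Real.pi / d := by push_cast; field_simp; ring
      have e2 : (k * Real.pi * (2 * (n+1:ℕ) + 1) / d + k * Real.pi * (2 * n + 1) / d) / 2
          = 2 * Real.pi * (n+1:ℕ) * k / d := by push_cast; field_simp; ring
      rw [e1, e2] at h
      push_cast at h ⊢
      field_simp
      rw [show ((k:ℝ) * Real.pi * 2 * ((n:ℝ) + 1) / d) = 2 * Real.pi * ((n:ℝ) + 1) * k / d by ring]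
      linear_combination h
    rw [Finset.sum_congr rfl hstep, Finset.sum_add_distrib, ← Finset.mul_sum]
    have hcos := cos_sum_lemma d (n+1) hd
    have hsplit : ∑ k ∈ Finset.range d, Real.cos (2 * Real.pi * (n+1:ℕ) * k / d)
        = 1 + ∑ k ∈ Finset.Ico 1 d, Real.cos (2 * Real.pi * (n+1:ℕ) * k / d) := by
      rw [Finset.range_eq_Ico, ← Finset.sum_Ico_consecutive _ (by omega : 0 ≤ 1) hd]
      norm_num
    rw [hsplit] at hcos
    have hIco : ∑ k ∈ Finset.Ico 1 d, Real.cos (2 * Real.pi * (n+1:ℕ) * k / d)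
        = (if d ∣ (n+1) then (d : ℝ) else 0) - 1 := by linarith
    rw [hIco, Nat.succ_div]
    by_cases hdvd : d ∣ (n + 1) <;> simp [hdvd] <;> push_cast <;> linarith
end

section
/- Let g and c be integers, let d_1, …, d_e be integers with d_i ≥ 2 for each i, and set V = 2π(2g − 2 + c + Σ_{i=1}^{e}(1 − 1/d_i)). Then for every natural number n ≥ 0, (V/(2π))(2n+1) − Σ_{i=1}^{e} (1/d_i) Σ_{k=1}^{d_i−1} sin(kπ(2n+1)/d_i)/sin(kπ/d_i) = (2n+1)(2g−2+c) + 2ne − 2Σ_{i=1}^{e} ⌊n/d_i⌋. -/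
open Real Finset

private lemma dirichlet_kernel (n : ℕ) (x : ℝ) :
    Real.sin ((2 * (n : ℝ) + 1) * x)
      = Real.sin x * (1 + 2 * ∑ j ∈ Finset.Icc 1 n, Real.cos (2 * (j : ℝ) * x)) := by
  induction n with
  | zero => simp
  | succ n ih =>
    have key := Real.sin_sub_sin ((2 * (n : ℝ) + 3) * x) ((2 * (n : ℝ) + 1) * x)
    have h1 : ((2 * (n : ℝ) + 3) * x - (2 * (n : ℝ) + 1) * x) / 2 = x := by ring
    have h2 : ((2 * (n : ℝ) + 3) * x + (2 * (n : ℝ) + 1) * x) / 2 = 2 * ((n : ℝ) + 1) * x := by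
      ring
    rw [h1, h2] at key
    have harg : (2 * ((n : ℕ) + 1 : ℝ) + 1) * x = (2 * (n : ℝ) + 3) * x := by ring
    rw [Finset.sum_Icc_succ_top (by omega)]
    push_cast
    rw [harg]
    have hs : Real.sin ((2 * (n : ℝ) + 3) * x)
        = Real.sin ((2 * (n : ℝ) + 1) * x) + 2 * Real.sin x * Real.cos (2 * ((n : ℝ) + 1) * x) := by
      linarith
    rw [hs, ih]; ring

private lemma cos_range_sum (D j : ℕ) (hD : 0 < D) (hnd : ¬ D ∣ j) :
    ∑ k ∈ Finset.range D, Real.cos (2 * π * (j : ℝ) * (k : ℝ) / (D : ℝ)) = 0 := by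
  have hDR : (D : ℝ) ≠ 0 := Nat.cast_ne_zero.mpr hD.ne'
  set z : ℂ := Complex.exp ((2 * π * (j : ℝ) / (D : ℝ) : ℝ) * Complex.I) with hz
  have hzk : ∀ k : ℕ, z ^ k
      = Complex.exp ((2 * π * (j : ℝ) * (k : ℝ) / (D : ℝ) : ℝ) * Complex.I) := by
    intro k
    rw [hz, ← Complex.exp_nat_mul]
    congr 1
    push_cast
    ring
  have hzD : z ^ D = 1 := by
    rw [hz, ← Complex.exp_nat_mul]
    have : (D : ℂ) * (((2 * π * (j : ℝ) / (D : ℝ) : ℝ) : ℂ) * Complex.I)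
        = ((j : ℤ) : ℂ) * (2 * (π : ℂ) * Complex.I) := by
      have hDC : (D : ℂ) ≠ 0 := Nat.cast_ne_zero.mpr hD.ne'
      push_cast
      field_simp
    rw [this, Complex.exp_int_mul_two_pi_mul_I]
  have hz1 : z ≠ 1 := by
    intro h
    rw [hz, Complex.exp_eq_one_iff] at h
    obtain ⟨m, hm⟩ := h
    have hm' : ((2 * π * (j : ℝ) / (D : ℝ) : ℝ) : ℂ) * Complex.I
        = (((m : ℝ) * (2 * π) : ℝ) : ℂ) * Complex.I := by
      rw [hm]; push_cast; ring
    have hre : (2 * π * (j : ℝ) / (D : ℝ) : ℝ) = (m : ℝ) * (2 * π) :=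
      Complex.ofReal_inj.mp (mul_right_cancel₀ Complex.I_ne_zero hm')
    have hj : (j : ℝ) = (m : ℝ) * (D : ℝ) := by
      have h2π : (2 * π : ℝ) ≠ 0 := by positivity
      have h' : (j : ℝ) * (2 * π) = ((m : ℝ) * (D : ℝ)) * (2 * π) := by
        field_simp at hre
        rw [hre]; ring
      exact mul_right_cancel₀ h2π h'
    have hjz : (j : ℤ) = m * (D : ℤ) := by exact_mod_cast hj
    exact hnd (Int.natCast_dvd_natCast.mp ⟨m, by rw [hjz]; ring⟩)
  have : ∑ k ∈ Finset.range D, Real.cos (2 * π * (j : ℝ) * (k : ℝ) / (D : ℝ))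
      = (∑ k ∈ Finset.range D, z ^ k).re := by
    rw [Complex.re_sum]
    refine Finset.sum_congr rfl fun k _ => ?_
    rw [hzk k, Complex.exp_ofReal_mul_I_re]
  rw [this, geom_sum_eq hz1, hzD]
  simp


private theorem key_sum (D : ℕ) (hD : 2 ≤ D) (n : ℕ) :
    ∑ k ∈ Finset.Ico 1 D,
        Real.sin ((k : ℝ) * π * (2 * (n : ℝ) + 1) / (D : ℝ)) /
          Real.sin ((k : ℝ) * π / (D : ℝ))
      = (D : ℝ) - 1 - 2 * n + 2 * D * ((n / D : ℕ) : ℝ) := by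
  have hD0 : 0 < D := by omega
  have hDR : (0 : ℝ) < D := by exact_mod_cast hD0
  have h1 : ∀ k ∈ Finset.Ico 1 D,
      Real.sin ((k : ℝ) * π * (2 * (n : ℝ) + 1) / (D : ℝ)) /
          Real.sin ((k : ℝ) * π / (D : ℝ))
        = 1 + 2 * ∑ j ∈ Finset.Icc 1 n, Real.cos (2 * π * (j : ℝ) * (k : ℝ) / (D : ℝ)) := by
    intro k hk
    obtain ⟨hk1, hk2⟩ := Finset.mem_Ico.mp hk
    have hkR : (0 : ℝ) < k := by exact_mod_cast hk1
    have hx0 : 0 < (k : ℝ) * π / (D : ℝ) := by positivity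
    have hxπ : (k : ℝ) * π / (D : ℝ) < π := by
      rw [div_lt_iff₀ hDR]
      have hkD : (k : ℝ) < D := by exact_mod_cast hk2
      nlinarith [Real.pi_pos]
    have hsin : Real.sin ((k : ℝ) * π / (D : ℝ)) ≠ 0 :=
      ne_of_gt (Real.sin_pos_of_pos_of_lt_pi hx0 hxπ)
    have harg : (k : ℝ) * π * (2 * (n : ℝ) + 1) / (D : ℝ)
        = (2 * (n : ℝ) + 1) * ((k : ℝ) * π / (D : ℝ)) := by ring
    rw [harg, dirichlet_kernel n ((k : ℝ) * π / (D : ℝ)), mul_div_cancel_left₀ _ hsin]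
    congr 2
    exact Finset.sum_congr rfl fun j _ => by
      rw [show (2:ℝ) * (j : ℝ) * ((k : ℝ) * π / (D : ℝ))
          = 2 * π * (j : ℝ) * (k : ℝ) / (D : ℝ) from by ring]
  have h2 : ∀ j : ℕ, ∑ k ∈ Finset.Ico 1 D, Real.cos (2 * π * (j : ℝ) * (k : ℝ) / (D : ℝ))
      = (if D ∣ j then (D : ℝ) else 0) - 1 := by
    intro j
    have hsplit : ∑ k ∈ Finset.range D, Real.cos (2 * π * (j : ℝ) * (k : ℝ) / (D : ℝ))
        = Real.cos (2 * π * (j : ℝ) * ((0:ℕ) : ℝ) / (D : ℝ))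
          + ∑ k ∈ Finset.Ico 1 D, Real.cos (2 * π * (j : ℝ) * (k : ℝ) / (D : ℝ)) := by
      rw [Finset.range_eq_Ico]
      exact Finset.sum_eq_sum_Ico_succ_bot hD0 _
    have hzero : Real.cos (2 * π * (j : ℝ) * ((0:ℕ) : ℝ) / (D : ℝ)) = 1 := by
      simp
    by_cases hdvd : D ∣ j
    · obtain ⟨m, rfl⟩ := hdvd
      have hall : ∑ k ∈ Finset.range D, Real.cos (2 * π * ((D * m : ℕ) : ℝ) * (k : ℝ) / (D : ℝ))
          = D := by
        rw [Finset.sum_congr rfl fun k _ => ?_]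
        · rw [Finset.sum_const, Finset.card_range, nsmul_eq_mul, mul_one]
        · rw [show 2 * π * ((D * m : ℕ) : ℝ) * (k : ℝ) / (D : ℝ)
              = ((m * k : ℕ) : ℝ) * (2 * π) from by push_cast; field_simp]
          exact Real.cos_nat_mul_two_pi _
      rw [if_pos ⟨m, rfl⟩]
      rw [hall, hzero] at hsplit
      linarith
    · rw [if_neg hdvd]
      rw [cos_range_sum D j hD0 hdvd, hzero] at hsplit
      linarith
  rw [Finset.sum_congr rfl h1, Finset.sum_add_distrib, Finset.sum_const, Nat.card_Ico,
    ← Finset.mul_sum, Finset.sum_comm, Finset.sum_congr rfl fun j _ => h2 j,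
    Finset.sum_sub_distrib, Finset.sum_const, Nat.card_Icc]
  have h3 : ∑ j ∈ Finset.Icc 1 n, (if D ∣ j then (D : ℝ) else 0)
      = ((n / D : ℕ) : ℝ) * D := by
    rw [← Finset.sum_filter, Finset.sum_const, nsmul_eq_mul]
    congr 1
    have hIcc : Finset.Icc 1 n = Finset.Ioc 0 n := by
      rw [← Finset.Icc_add_one_left_eq_Ioc, zero_add]
    rw [hIcc]
    exact_mod_cast Nat.Ioc_filter_dvd_card_eq_div n D
  rw [h3]
  have hcast : ((D - 1 : ℕ) : ℝ) = (D : ℝ) - 1 := by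
    have : 1 ≤ D := by omega
    push_cast [this]
    ring
  simp only [nsmul_eq_mul, Nat.add_sub_cancel, hcast]
  ring

/-- With `V = 2π(2g − 2 + c + ∑ᵢ (1 − 1/dᵢ))` the Gauss–Bonnet volume, the multiplicity
`m_n = (V/(2π))(2n+1) − ∑ᵢ (1/dᵢ) ∑_{k=1}^{dᵢ−1} sin(kπ(2n+1)/dᵢ)/sin(kπ/dᵢ)` of the trivial
zero of the Selberg zeta function at `s = −n` equals
`(2n+1)(2g−2+c) + 2ne − 2∑ᵢ ⌊n/dᵢ⌋`. -/

theorem trivial_zero_multiplicity (g c : ℤ) (e : ℕ) (d : Fin e → ℤ)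
    (hd : ∀ i, 2 ≤ d i)
    (V : ℝ)
    (hV : V = 2 * Real.pi * ((2 * g - 2 + c : ℤ) + ∑ i, (1 - 1 / (d i : ℝ)))) :
    ∀ n : ℕ,
      V / (2 * Real.pi) * (2 * n + 1) -
        ∑ i, (1 / (d i : ℝ)) *
          ∑ k ∈ Finset.Ico 1 (d i).toNat,
            Real.sin (k * Real.pi * (2 * n + 1) / (d i : ℝ)) /
              Real.sin (k * Real.pi / (d i : ℝ))
      = ((2 * n + 1 : ℤ) * (2 * g - 2 + c) + 2 * n * e
          - 2 * ∑ i, ⌊(n : ℝ) / (d i : ℝ)⌋ : ℤ) := by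
  intro n
  have h2π : (2 * Real.pi : ℝ) ≠ 0 := by positivity
  have hdt : ∀ i, 2 ≤ (d i).toNat := fun i => by have := hd i; omega
  have hdc : ∀ i, (d i : ℝ) = (((d i).toNat : ℕ) : ℝ) := by
    intro i
    rw [← Int.toNat_of_nonneg (by linarith [hd i] : (0:ℤ) ≤ d i)]
    push_cast
    rfl
  have hdne : ∀ i, (d i : ℝ) ≠ 0 := by
    intro i
    have := hd i
    have : (2 : ℝ) ≤ (d i : ℝ) := by exact_mod_cast this
    linarith
  have hS : ∀ i : Fin e, (1 / (d i : ℝ)) *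
      ∑ k ∈ Finset.Ico 1 (d i).toNat,
        Real.sin ((k : ℝ) * Real.pi * (2 * (n : ℝ) + 1) / (d i : ℝ)) /
          Real.sin ((k : ℝ) * Real.pi / (d i : ℝ))
      = (2 * (n : ℝ) + 1) * (1 - 1 / (d i : ℝ))
        - (2 * (n : ℝ) - 2 * ((n / (d i).toNat : ℕ) : ℝ)) := by
    intro i
    rw [hdc i, key_sum (d i).toNat (hdt i) n]
    have hne : ((((d i).toNat : ℕ) : ℝ)) ≠ 0 := by rw [← hdc i]; exact hdne i
    field_simp
    ring
  have hF : ∀ i : Fin e, ⌊(n : ℝ) / (d i : ℝ)⌋ = ((n / (d i).toNat : ℕ) : ℤ) := by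
    intro i
    rw [hdc i, ← Nat.floor_div_eq_div (K := ℝ) n (d i).toNat]
    exact (Int.natCast_floor_eq_floor (by positivity)).symm
  rw [hV, mul_div_cancel_left₀ _ h2π, Finset.sum_congr rfl fun i _ => hS i]
  have expand : ∑ i : Fin e, ((2 * (n : ℝ) + 1) * (1 - 1 / (d i : ℝ))
        - (2 * (n : ℝ) - 2 * ((n / (d i).toNat : ℕ) : ℝ)))
      = (2 * (n : ℝ) + 1) * (∑ i : Fin e, (1 - 1 / (d i : ℝ)))
        - (2 * (n : ℝ) * e - 2 * ∑ i : Fin e, ((n / (d i).toNat : ℕ) : ℝ)) := by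
    rw [Finset.sum_sub_distrib]
    congr 1
    · exact (Finset.mul_sum _ _ _).symm
    · rw [Finset.sum_sub_distrib, Finset.sum_const, Finset.card_univ, Fintype.card_fin,
        nsmul_eq_mul, ← Finset.mul_sum]
      ring
  rw [expand]
  simp only [hF]
  push_cast
  simp only [← Int.natCast_div, Int.cast_natCast]
  ring
end

section
/- The infinite product ∏_{n=1}^{∞} (1 + z/n)^n · exp(−z + z²/(2n)) converges locally uniformly on ℂ, so that G(z+1) := (2π)^{z/2} exp(−[(1+γ)z² + z]/2) ∏_{n=1}^{∞} (1 + z/n)^n exp(−z + z²/(2n)) defines an entire function of z; moreover G(z+1) vanishes exactly at the points z = −n for positive integers n, and the zero at z = −n has multiplicity exactly n. -/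
/-!
With `w = z / (n + 1)`, the `n`-th factor of the product is
`exp ((n + 1) * (log (1 + w) - w + w ^ 2 / 2))` once `‖w‖ ≤ 1 / 2`, and the exponent is
`O(‖z‖ ^ 3 / n ^ 2)`. Hence the factors are `1 + O(n⁻²)` uniformly on compact sets, so the product
converges locally uniformly to an entire function which vanishes exactly where some factor does.
At `z = -m` only the factor `(1 + z / m) ^ m` vanishes; the product of the other factors is again
entire and nonzero at `-m`, so the zero has order exactly `m`.
-/

open Complex Real Filter

/-- The infinite product defining the Barnes double Gamma function. -/
noncomputable def barnesProd (z : ℂ) : ℂ :=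
  ∏' n : ℕ, (1 + z / (n + 1)) ^ (n + 1) * Complex.exp (-z + z ^ 2 / (2 * ((n : ℂ) + 1)))

/-- The Barnes double Gamma function: `barnesG1 z = G(z+1)`. -/
noncomputable def barnesG1 (z : ℂ) : ℂ :=
  (2 * Real.pi : ℂ) ^ (z / 2) *
    Complex.exp (-(((1 + (Real.eulerMascheroniConstant : ℂ)) * z ^ 2 + z) / 2)) * barnesProd z

section InfiniteProduct

variable {α R : Type*} [TopologicalSpace α] [NormedCommRing R]

def LocallySummableSubOne (F : ℕ → α → R) : Prop :=
  ∀ K : Set α, IsCompact K →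
    ∃ u : ℕ → ℝ, Summable u ∧ ∀ᶠ n in atTop, ∀ x ∈ K, ‖F n x - 1‖ ≤ u n

namespace LocallySummableSubOne

variable {F : ℕ → α → R}

theorem summable_norm_sub_one (hF : LocallySummableSubOne F) (x : α) :
    Summable fun n ↦ ‖F n x - 1‖ := by
  obtain ⟨u, hu, hbound⟩ := hF {x} isCompact_singleton
  exact .of_norm_bounded_eventually_nat hu <| by
    filter_upwards [hbound] with n hn using by simpa using hn x rfl

theorem ite (hF : LocallySummableSubOne F) (k : ℕ) :
    LocallySummableSubOne fun n x ↦ if n = k then 1 else F n x := by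
  intro K hK
  obtain ⟨u, hu, hbound⟩ := hF K hK
  refine ⟨u, hu, ?_⟩
  filter_upwards [hbound, eventually_ne_atTop k] with n hn hnk
  simpa [hnk] using hn

variable [NormOneClass R] [CompleteSpace R]

theorem hasProdLocallyUniformlyOn [LocallyCompactSpace α] (hF : LocallySummableSubOne F)
    (hc : ∀ n, Continuous (F n)) :
    HasProdLocallyUniformlyOn F (fun x ↦ ∏' n, F n x) Set.univ := by
  refine hasProdLocallyUniformlyOn_of_forall_compact isOpen_univ fun K _ hK ↦ ?_
  obtain ⟨u, hu, hbound⟩ := hF K hK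
  simpa using hu.hasProdUniformlyOn_nat_one_add hK hbound
    fun n ↦ ((hc n).sub continuous_const).continuousOn

theorem multipliable (hF : LocallySummableSubOne F) (x : α) : Multipliable (F · x) := by
  simpa using multipliable_one_add_of_summable (hF.summable_norm_sub_one x)

theorem tprod_eq_mul_tprod_ite (hF : LocallySummableSubOne F) (k : ℕ) (x : α) :
    ∏' n, F n x = F k x * ∏' n, if n = k then 1 else F n x := by
  refine Multipliable.tprod_eq_mul_tprod_ite' k ?_
  convert (hF.ite k).multipliable x using 2 with n
  simp [Function.update_apply]

theorem tprod_ne_zero [NormMulClass R] (hF : LocallySummableSubOne F) {x : α}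
    (hx : ∀ n, F n x ≠ 0) : ∏' n, F n x ≠ 0 := by
  simpa using tprod_one_add_ne_zero_of_summable (by simpa using hx) (hF.summable_norm_sub_one x)

theorem tprod_eq_zero_iff [NormMulClass R] (hF : LocallySummableSubOne F) {x : α} :
    ∏' n, F n x = 0 ↔ ∃ n, F n x = 0 := by
  refine ⟨fun h ↦ by_contra fun hx ↦ hF.tprod_ne_zero (not_exists.mp hx) h, ?_⟩
  rintro ⟨k, hk⟩
  rw [hF.tprod_eq_mul_tprod_ite k, hk, zero_mul]

end LocallySummableSubOne

end InfiniteProduct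

theorem LocallySummableSubOne.differentiable {F : ℕ → ℂ → ℂ} (hF : LocallySummableSubOne F)
    (hd : ∀ n, Differentiable ℂ (F n)) : Differentiable ℂ fun z ↦ ∏' n, F n z := by
  rw [← differentiableOn_univ]
  refine (hF.hasProdLocallyUniformlyOn fun n ↦ (hd n).continuous).differentiableOn
    (.of_forall fun s ↦ ?_) isOpen_univ
  exact (Differentiable.fun_finsetProd fun n _ ↦ hd n).differentiableOn

theorem Complex.norm_log_one_add_sub_logTaylor_three_le {w : ℂ} (hw : ‖w‖ ≤ 1 / 2) :
    ‖log (1 + w) - logTaylor 3 w‖ ≤ ‖w‖ ^ 3 := by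
  have hinv : (1 - ‖w‖)⁻¹ ≤ 2 := by
    rw [inv_le_comm₀ (by linarith) two_pos]
    linarith
  calc ‖log (1 + w) - logTaylor 3 w‖ ≤ ‖w‖ ^ 3 * (1 - ‖w‖)⁻¹ / 3 :=
        (norm_log_sub_logTaylor_le 2 (hw.trans_lt (by norm_num))).trans_eq (by norm_num)
    _ ≤ ‖w‖ ^ 3 * 2 / 3 := by gcongr
    _ ≤ ‖w‖ ^ 3 := by linarith [pow_nonneg (norm_nonneg w) 3]

theorem summable_div_nat_add_one_sq (c : ℝ) : Summable fun n : ℕ ↦ c / ((n : ℝ) + 1) ^ 2 := by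
  have := (summable_nat_add_iff 1).mpr (Real.summable_one_div_nat_pow.mpr one_lt_two)
  push_cast at this
  simpa [div_eq_mul_inv] using this.mul_left c

noncomputable def barnesFactor (n : ℕ) (z : ℂ) : ℂ :=
  (1 + z / (n + 1)) ^ (n + 1) * cexp (-z + z ^ 2 / (2 * ((n : ℂ) + 1)))

theorem barnesFactor_eq_exp (n : ℕ) {z : ℂ} (hz : 1 + z / (n + 1) ≠ 0) :
    barnesFactor n z =
      cexp (((n : ℂ) + 1) * (log (1 + z / (n + 1)) - logTaylor 3 (z / (n + 1)))) := by
  have hn : (n : ℂ) + 1 ≠ 0 := Nat.cast_add_one_ne_zero n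
  have hT : logTaylor 3 (z / (n + 1)) = z / (n + 1) - (z / (n + 1)) ^ 2 / 2 := by
    simp [logTaylor_succ, logTaylor_zero]
    ring
  have hexponent : ((n : ℂ) + 1) * (log (1 + z / (n + 1)) - logTaylor 3 (z / (n + 1))) =
      ((n + 1 : ℕ) : ℂ) * log (1 + z / (n + 1)) + (-z + z ^ 2 / (2 * ((n : ℂ) + 1))) := by
    rw [hT]
    push_cast
    field_simp
    ring
  rw [hexponent, Complex.exp_add, Complex.exp_nat_mul, Complex.exp_log hz, barnesFactor]

theorem norm_barnesFactor_sub_one_le {n : ℕ} {z : ℂ} (h2 : 2 * ‖z‖ ≤ n + 1)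
    (h3 : ‖z‖ ^ 3 ≤ n + 1) : ‖barnesFactor n z - 1‖ ≤ 2 * ‖z‖ ^ 3 / (n + 1) ^ 2 := by
  have hn : (0 : ℝ) < n + 1 := n.cast_add_one_pos
  have hnorm : ‖(n : ℂ) + 1‖ = n + 1 := by exact_mod_cast Complex.norm_natCast (n + 1)
  have hw : ‖z / (n + 1)‖ ≤ 1 / 2 := by
    rw [norm_div, hnorm, div_le_iff₀ hn]
    linarith
  have hne : 1 + z / (n + 1) ≠ 0 := by
    intro h
    rw [add_eq_zero_iff_eq_neg'] at h
    norm_num [h] at hw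
  have hexp : ‖((n : ℂ) + 1) * (log (1 + z / (n + 1)) - logTaylor 3 (z / (n + 1)))‖
      ≤ ‖z‖ ^ 3 / (n + 1) ^ 2 :=
    calc _ ≤ (n + 1) * ‖z / (n + 1)‖ ^ 3 := by
          rw [norm_mul, hnorm]
          gcongr
          exact norm_log_one_add_sub_logTaylor_three_le hw
      _ = ‖z‖ ^ 3 / (n + 1) ^ 2 := by
          rw [norm_div, hnorm]
          field_simp
  rw [barnesFactor_eq_exp n hne]
  refine (norm_exp_sub_one_le (hexp.trans ?_)).trans (by rw [mul_div_assoc]; gcongr)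
  rw [div_le_one (by positivity)]
  nlinarith

theorem locallySummableSubOne_barnesFactor : LocallySummableSubOne barnesFactor := by
  intro K hK
  obtain ⟨r, hr⟩ := hK.isBounded.subset_closedBall 0
  refine ⟨_, summable_div_nat_add_one_sq (2 * r ^ 3), ?_⟩
  filter_upwards [tendsto_natCast_atTop_atTop.eventually_ge_atTop (max (2 * r) (r ^ 3))]
    with n hn z hz
  have hzr : ‖z‖ ≤ r := by simpa using hr hz
  have hz3 : ‖z‖ ^ 3 ≤ r ^ 3 := by gcongr
  refine (norm_barnesFactor_sub_one_le ?_ ?_).trans (by gcongr)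
  · linarith [le_max_left (2 * r) (r ^ 3)]
  · linarith [le_max_right (2 * r) (r ^ 3)]

theorem differentiable_barnesFactor (n : ℕ) : Differentiable ℂ (barnesFactor n) := by
  unfold barnesFactor
  fun_prop

theorem barnesFactor_eq_pow_mul (n : ℕ) (z : ℂ) :
    barnesFactor n z = (z + (n + 1)) ^ (n + 1) *
      (cexp (-z + z ^ 2 / (2 * ((n : ℂ) + 1))) / ((n : ℂ) + 1) ^ (n + 1)) := by
  have hn : (n : ℂ) + 1 ≠ 0 := Nat.cast_add_one_ne_zero n
  rw [barnesFactor, ← mul_div_assoc, mul_div_right_comm, ← div_pow, add_div, div_self hn, add_comm]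

theorem barnesFactor_eq_zero_iff {n : ℕ} {z : ℂ} : barnesFactor n z = 0 ↔ z = -(n + 1) := by
  rw [barnesFactor_eq_pow_mul, mul_eq_zero, or_iff_left (div_ne_zero (Complex.exp_ne_zero _)
    (pow_ne_zero _ (Nat.cast_add_one_ne_zero n))), pow_eq_zero_iff n.succ_ne_zero,
    add_eq_zero_iff_eq_neg]

theorem barnesProd_eq_tprod (z : ℂ) : barnesProd z = ∏' n, barnesFactor n z := rfl

theorem tendstoLocallyUniformly_barnesProd :
    TendstoLocallyUniformly (fun N z ↦ ∏ n ∈ Finset.range N, barnesFactor n z) barnesProd atTop :=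
  tendstoLocallyUniformlyOn_univ.mp (locallySummableSubOne_barnesFactor.hasProdLocallyUniformlyOn
    fun n ↦ (differentiable_barnesFactor n).continuous).tendstoLocallyUniformlyOn_finsetRange

theorem differentiable_barnesProd : Differentiable ℂ barnesProd :=
  locallySummableSubOne_barnesFactor.differentiable differentiable_barnesFactor

theorem barnesProd_eq_zero_iff {z : ℂ} : barnesProd z = 0 ↔ ∃ n : ℕ, 0 < n ∧ z = -(n : ℂ) := by
  rw [barnesProd_eq_tprod, locallySummableSubOne_barnesFactor.tprod_eq_zero_iff]
  simp only [barnesFactor_eq_zero_iff]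
  constructor
  · rintro ⟨n, rfl⟩
    exact ⟨n + 1, n.succ_pos, by push_cast; rfl⟩
  · rintro ⟨n, hn, rfl⟩
    obtain ⟨k, rfl⟩ := Nat.exists_eq_add_one_of_ne_zero hn.ne'
    exact ⟨k, by push_cast; rfl⟩

noncomputable def barnesG1Prefactor (z : ℂ) : ℂ :=
  (2 * π : ℂ) ^ (z / 2) * cexp (-(((1 + (eulerMascheroniConstant : ℂ)) * z ^ 2 + z) / 2))

theorem barnesG1_eq (z : ℂ) : barnesG1 z = barnesG1Prefactor z * barnesProd z := rfl

theorem two_mul_ofReal_pi_ne_zero : (2 * π : ℂ) ≠ 0 := by exact_mod_cast Real.two_pi_pos.ne'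

theorem barnesG1Prefactor_ne_zero (z : ℂ) : barnesG1Prefactor z ≠ 0 :=
  mul_ne_zero (cpow_ne_zero_iff.mpr (.inl two_mul_ofReal_pi_ne_zero)) (Complex.exp_ne_zero _)

theorem differentiable_barnesG1Prefactor : Differentiable ℂ barnesG1Prefactor := fun _ ↦
  ((differentiableAt_id.div_const 2).const_cpow (.inl two_mul_ofReal_pi_ne_zero)).mul (by fun_prop)

theorem differentiable_barnesG1 : Differentiable ℂ barnesG1 :=
  differentiable_barnesG1Prefactor.mul differentiable_barnesProd

theorem barnesG1_eq_zero_iff (z : ℂ) : barnesG1 z = 0 ↔ ∃ n : ℕ, 0 < n ∧ z = -(n : ℂ) := by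
  rw [barnesG1_eq, mul_eq_zero, or_iff_right (barnesG1Prefactor_ne_zero z), barnesProd_eq_zero_iff]

theorem exists_barnesG1_eq_pow_mul (n : ℕ) (hn : 0 < n) :
    ∃ g : ℂ → ℂ, AnalyticAt ℂ g (-(n : ℂ)) ∧ g (-(n : ℂ)) ≠ 0 ∧
      ∀ z, barnesG1 z = (z + n) ^ n * g z := by
  obtain ⟨k, rfl⟩ := Nat.exists_eq_add_one_of_ne_zero hn.ne'
  set Q : ℂ → ℂ := fun z ↦ ∏' m, if m = k then 1 else barnesFactor m z
  refine ⟨fun z ↦ barnesG1Prefactor z *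
    (cexp (-z + z ^ 2 / (2 * ((k : ℂ) + 1))) / ((k : ℂ) + 1) ^ (k + 1)) * Q z, ?_, ?_, ?_⟩
  · have hQ : Differentiable ℂ Q := (locallySummableSubOne_barnesFactor.ite k).differentiable
      fun m ↦ by split_ifs <;> simp [differentiable_barnesFactor]
    exact ((differentiable_barnesG1Prefactor.mul (by fun_prop)).mul hQ).analyticAt _
  · have hQ : Q (-(k + 1 : ℕ)) ≠ 0 := (locallySummableSubOne_barnesFactor.ite k).tprod_ne_zero
      fun m ↦ by
        split_ifs with hm
        · exact one_ne_zero
        · rw [Ne, barnesFactor_eq_zero_iff, neg_inj]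
          intro h
          exact hm (Nat.succ_injective (by exact_mod_cast h.symm))
    exact mul_ne_zero (mul_ne_zero (barnesG1Prefactor_ne_zero _) (div_ne_zero
      (Complex.exp_ne_zero _) (pow_ne_zero _ (Nat.cast_add_one_ne_zero k)))) hQ
  · intro z
    rw [barnesG1_eq, barnesProd_eq_tprod,
      locallySummableSubOne_barnesFactor.tprod_eq_mul_tprod_ite k, barnesFactor_eq_pow_mul]
    push_cast
    ring

/-- The product `∏ₙ (1 + z/n)ⁿ exp(−z + z²/(2n))` converges locally uniformly on `ℂ`, so that
`G(z+1) = (2π)^{z/2} exp(−[(1+γ)z² + z]/2) ∏ₙ (1 + z/n)ⁿ exp(−z + z²/(2n))` is an entire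
function; it vanishes exactly at `z = −n` for positive integers `n`, with a zero of
multiplicity exactly `n` there. -/
theorem barnesG_entire_zeros :
    TendstoLocallyUniformly
      (fun N : ℕ => fun z : ℂ =>
        ∏ n ∈ Finset.range N,
          (1 + z / (n + 1)) ^ (n + 1) * Complex.exp (-z + z ^ 2 / (2 * ((n : ℂ) + 1))))
      barnesProd atTop ∧
    Differentiable ℂ barnesG1 ∧
    (∀ z : ℂ, barnesG1 z = 0 ↔ ∃ n : ℕ, 0 < n ∧ z = -(n : ℂ)) ∧
    (∀ n : ℕ, 0 < n → ∃ g : ℂ → ℂ, AnalyticAt ℂ g (-(n : ℂ)) ∧ g (-(n : ℂ)) ≠ 0 ∧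
      ∀ᶠ z in nhds (-(n : ℂ)), barnesG1 z = (z + n) ^ n * g z) := by
  exact ⟨tendstoLocallyUniformly_barnesProd, differentiable_barnesG1, barnesG1_eq_zero_iff,
    fun n hn ↦ (exists_barnesG1_eq_pow_mul n hn).imp fun _ ⟨hg, hg0, h⟩ ↦ ⟨hg, hg0, .of_forall h⟩⟩
end

section
/- The Barnes double Gamma function has order at most two as an entire function: for every ε > 0 there exists a constant C > 0 such that |G(z+1)| ≤ C · exp(|z|^{2+ε}) for all z ∈ ℂ. -/
open Complex Real

set_option maxHeartbeats 1000000

noncomputable def barnesU (r : ℝ) (n : ℕ) : ℝ :=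
  if 2 * r ≤ (n : ℝ) + 1 then r ^ 3 / ((n:ℝ) + 1) ^ 2 else 2 * r + r ^ 2 / (2 * ((n:ℝ) + 1))

lemma barnesU_nonneg (r : ℝ) (hr : 0 ≤ r) (n : ℕ) : 0 ≤ barnesU r n := by
  unfold barnesU; split_ifs <;> positivity

lemma barnesTerm_norm_le (z : ℂ) (n : ℕ) :
    ‖(1 + z / (n + 1)) ^ (n + 1) * Complex.exp (-z + z ^ 2 / (2 * ((n : ℂ) + 1)))‖
      ≤ Real.exp (barnesU ‖z‖ n) := by
  have hm : (0:ℝ) < (n:ℝ) + 1 := by positivity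
  have hcast : ((n:ℂ) + 1) = (((n:ℝ) + 1 : ℝ) : ℂ) := by push_cast; ring
  have hmC : ((n:ℂ) + 1) ≠ 0 := hcast ▸ Complex.ofReal_ne_zero.2 hm.ne'
  have hnorm : ‖((n:ℂ) + 1)‖ = (n:ℝ) + 1 := by
    rw [hcast, Complex.norm_real, Real.norm_of_nonneg hm.le]
  rw [barnesU]
  split_ifs with h
  · -- tail case
    set w : ℂ := z / ((n:ℂ) + 1) with hwdef
    have hwn : ‖w‖ = ‖z‖ / ((n:ℝ)+1) := by rw [hwdef, norm_div, hnorm]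
    have hw2 : ‖w‖ ≤ 1/2 := by
      rw [hwn, div_le_iff₀ hm]; linarith
    have hw1 : ‖w‖ < 1 := by linarith
    have h1w : (1 : ℂ) + w ≠ 0 := by
      intro hc
      have hwm : w = -1 := by linear_combination hc
      rw [hwm] at hw2; norm_num at hw2
    have hz : z = ((n:ℂ)+1) * w := by
      rw [hwdef, mul_div_cancel₀ _ hmC]
    have e1 : (1 + z / (n + 1) : ℂ) = 1 + w := by rw [hwdef]
    have e2 : ((n:ℂ)+1) * Complex.log (1+w) + (-z + z^2/(2*((n:ℂ)+1)))
        = ((n:ℂ)+1) * (Complex.log (1+w) - w + w^2/2) := by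
      rw [hz]; field_simp; ring
    have e3 : Complex.exp (((n:ℂ)+1) * Complex.log (1+w)) = (1+w)^(n+1) := by
      rw [show ((n:ℂ)+1) = ((n+1:ℕ):ℂ) by push_cast; ring, Complex.exp_nat_mul,
        Complex.exp_log h1w]
    have key : (1 + z / (n + 1)) ^ (n + 1) * Complex.exp (-z + z ^ 2 / (2 * ((n : ℂ) + 1)))
        = Complex.exp (((n:ℂ)+1) * (Complex.log (1 + w) - w + w^2/2)) := by
      rw [e1, ← e3, ← Complex.exp_add, e2]
    rw [key, Complex.norm_exp]
    apply Real.exp_le_exp.2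
    calc (((n:ℂ)+1) * (Complex.log (1 + w) - w + w^2/2)).re
        ≤ ‖((n:ℂ)+1) * (Complex.log (1 + w) - w + w^2/2)‖ := Complex.re_le_norm _
      _ = ((n:ℝ)+1) * ‖Complex.log (1 + w) - w + w^2/2‖ := by
          rw [norm_mul, hnorm]
      _ ≤ ((n:ℝ)+1) * ‖w‖^3 := by
          gcongr
          have hlt : logTaylor 3 w = w - w^2/2 := by
            simp [Complex.logTaylor_succ, Complex.logTaylor_zero]
            ring
          have h3 : Complex.log (1 + w) - w + w^2/2 = Complex.log (1 + w) - logTaylor 3 w := by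
            rw [hlt]; ring
          rw [h3]
          refine (Complex.norm_log_sub_logTaylor_le 2 hw1).trans ?_
          have hinv : (1 - ‖w‖)⁻¹ ≤ 2 := by
            rw [inv_le_comm₀ (by linarith) (by norm_num)]
            linarith
          calc ‖w‖ ^ (2+1) * (1 - ‖w‖)⁻¹ / (2+1)
              ≤ ‖w‖^3 * 2 / 3 := by gcongr <;> norm_num
            _ ≤ ‖w‖^3 := by nlinarith [pow_nonneg (norm_nonneg w) 3]
      _ = ‖z‖^3 / ((n:ℝ)+1)^2 := by
          rw [hwn, div_pow]
          field_simp
  · -- head case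
    rw [norm_mul, norm_pow, Complex.norm_exp]
    have h1 : ‖(1 + z / (n + 1) : ℂ)‖ ≤ 1 + ‖z‖/((n:ℝ)+1) := by
      refine (norm_add_le _ _).trans ?_
      rw [norm_one, norm_div, hnorm]
    have h2 : (1 + ‖z‖/((n:ℝ)+1))^(n+1) ≤ Real.exp ‖z‖ := by
      calc (1 + ‖z‖/((n:ℝ)+1))^(n+1) ≤ (Real.exp (‖z‖/((n:ℝ)+1)))^(n+1) := by
            apply pow_le_pow_left₀ (by positivity)
            linarith [Real.add_one_le_exp (‖z‖/((n:ℝ)+1))]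
        _ = Real.exp (((n:ℝ)+1) * (‖z‖/((n:ℝ)+1))) := by
            rw [← Real.exp_nat_mul]; norm_num
        _ = Real.exp ‖z‖ := by
            rw [mul_div_cancel₀ _ hm.ne']
    have h3 : (-z + z ^ 2 / (2 * ((n : ℂ) + 1))).re ≤ ‖z‖ + ‖z‖^2/(2*((n:ℝ)+1)) := by
      refine (Complex.re_le_norm _).trans ?_
      refine (norm_add_le _ _).trans ?_
      rw [norm_neg, norm_div, norm_pow, norm_mul, hnorm]
      norm_num
    have h4 : ‖(1 + z / (n + 1) : ℂ)‖^(n+1) ≤ Real.exp ‖z‖ :=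
      (pow_le_pow_left₀ (norm_nonneg _) h1 _).trans h2
    refine (mul_le_mul h4 (Real.exp_le_exp.2 h3) (Real.exp_pos _).le (Real.exp_pos _).le).trans
      (le_of_eq ?_)
    rw [← Real.exp_add]
    ring_nf

lemma barnesU_sum_le (r : ℝ) (hr : 0 ≤ r) (s : Finset ℕ) :
    ∑ n ∈ s, barnesU r n ≤ 4*r^2 + r^2/2*(1 + Real.log (1+2*r)) + (r^2 + 2) := by
  classical
  rw [← Finset.sum_filter_add_sum_filter_not s (fun n : ℕ => 2*r ≤ (n:ℝ)+1)]
  have hlog : 0 ≤ Real.log (1+2*r) := Real.log_nonneg (by linarith)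
  have hbig : ∑ n ∈ s.filter (fun n : ℕ => 2*r ≤ (n:ℝ)+1), barnesU r n ≤ r^2 + 2 := by
    set k : ℕ := ⌈2*r⌉₊ - 1 with hk
    set N : ℕ := (s.sup id) + 2 with hN
    have step1 : ∑ n ∈ s.filter (fun n : ℕ => 2*r ≤ (n:ℝ)+1), barnesU r n
        = ∑ n ∈ s.filter (fun n : ℕ => 2*r ≤ (n:ℝ)+1), r^3 * (((n+1 : ℕ) : ℝ)^2)⁻¹ := by
      refine Finset.sum_congr rfl fun n hn => ?_
      rw [Finset.mem_filter] at hn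
      rw [barnesU, if_pos hn.2]
      push_cast
      ring
    rw [step1, ← Finset.mul_sum]
    have step2 : ∑ n ∈ s.filter (fun n : ℕ => 2*r ≤ (n:ℝ)+1), (((n+1 : ℕ) : ℝ)^2)⁻¹
        ≤ ∑ i ∈ Finset.Ioo k N, ((i:ℝ)^2)⁻¹ := by
      rw [← Finset.sum_image (f := fun i : ℕ => ((i : ℝ)^2)⁻¹)
        (g := fun n : ℕ => n + 1) (fun a _ b _ h => by simpa using h)]
      refine Finset.sum_le_sum_of_subset_of_nonneg ?_ (by intros; positivity)
      intro i hi
      simp only [Finset.mem_image, Finset.mem_filter] at hi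
      obtain ⟨n, ⟨hns, hnc⟩, rfl⟩ := hi
      have h1 : ⌈2*r⌉₊ ≤ n + 1 := Nat.ceil_le.2 (by exact_mod_cast hnc)
      have h2 : n ≤ s.sup id := Finset.le_sup (f := id) hns
      rw [Finset.mem_Ioo]
      omega
    have step3 : ∑ i ∈ Finset.Ioo k N, ((i:ℝ)^2)⁻¹ ≤ 2/((k:ℝ)+1) := by
      have := sum_Ioo_inv_sq_le (α := ℝ) k N
      push_cast at this ⊢
      convert this using 2
    have hks : 0 ≤ ∑ i ∈ Finset.Ioo k N, ((i:ℝ)^2)⁻¹ :=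
      Finset.sum_nonneg (by intros; positivity)
    have step4 : r^3 * (2/((k:ℝ)+1)) ≤ r^2 + 2 := by
      rcases le_or_gt r 1 with h1 | h1
      · have hk1 : (1:ℝ) ≤ (k:ℝ)+1 := by
          have := Nat.cast_nonneg (α := ℝ) k; linarith
        have h2 : 2/((k:ℝ)+1) ≤ 2 := by
          rw [div_le_iff₀ (by positivity)]; nlinarith
        have : r^3 * (2/((k:ℝ)+1)) ≤ r^3 * 2 := by
          apply mul_le_mul_of_nonneg_left h2 (by positivity)
        nlinarith
      · have hceil : (2:ℝ)*r ≤ (k:ℝ)+1 := by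
          have h2 : 1 ≤ ⌈2*r⌉₊ := Nat.one_le_ceil_iff.2 (by linarith)
          have : ((k:ℕ):ℝ) + 1 = (⌈2*r⌉₊ : ℝ) := by
            rw [hk]; push_cast [Nat.cast_sub h2]; ring
          rw [this]
          exact Nat.le_ceil _
        have hle : r^3 * (2/((k:ℝ)+1)) ≤ r^3 * (2/(2*r)) := by
          apply mul_le_mul_of_nonneg_left _ (by positivity)
          apply div_le_div_of_nonneg_left (by norm_num) (by linarith) hceil
        calc r^3 * (2/((k:ℝ)+1)) ≤ r^3 * (2/(2*r)) := hle
          _ = r^2 := by field_simp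
          _ ≤ r^2 + 2 := by linarith
    calc r^3 * ∑ n ∈ s.filter (fun n : ℕ => 2*r ≤ (n:ℝ)+1), (((n+1 : ℕ) : ℝ)^2)⁻¹
        ≤ r^3 * (2/((k:ℝ)+1)) := by gcongr; exact step2.trans step3
      _ ≤ r^2 + 2 := step4
  have hsmall : ∑ n ∈ s.filter (fun n : ℕ => ¬ 2*r ≤ (n:ℝ)+1), barnesU r n
      ≤ 4*r^2 + r^2/2*(1 + Real.log (1+2*r)) := by
    set M : ℕ := ⌊2*r⌋₊ with hM
    have hsub : s.filter (fun n : ℕ => ¬ 2*r ≤ (n:ℝ)+1) ⊆ Finset.range M := by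
      intro n hn
      rw [Finset.mem_filter] at hn
      push_neg at hn
      have : (n:ℝ) + 1 ≤ 2*r := hn.2.le
      have : n + 1 ≤ M := Nat.le_floor (by exact_mod_cast this)
      rw [Finset.mem_range]; omega
    have heq : ∀ n ∈ s.filter (fun n : ℕ => ¬ 2*r ≤ (n:ℝ)+1),
        barnesU r n = 2*r + r^2/(2*((n:ℝ)+1)) := by
      intro n hn
      rw [Finset.mem_filter] at hn
      rw [barnesU, if_neg hn.2]
    rw [Finset.sum_congr rfl heq]
    have h1 : ∑ n ∈ s.filter (fun n : ℕ => ¬ 2*r ≤ (n:ℝ)+1), (2*r + r^2/(2*((n:ℝ)+1)))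
        ≤ ∑ n ∈ Finset.range M, (2*r + r^2/(2*((n:ℝ)+1))) :=
      Finset.sum_le_sum_of_subset_of_nonneg hsub (by intros; positivity)
    refine h1.trans ?_
    have hsum : ∑ n ∈ Finset.range M, (2*r + r^2/(2*((n:ℝ)+1)))
        = 2*r*M + r^2/2 * ∑ n ∈ Finset.range M, ((n:ℝ)+1)⁻¹ := by
      rw [Finset.sum_add_distrib, Finset.sum_const, nsmul_eq_mul, Finset.card_range, Finset.mul_sum]
      congr 1
      · ring
      · refine Finset.sum_congr rfl fun n _ => ?_
        have : ((n:ℝ)+1) ≠ 0 := by positivity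
        field_simp
    rw [hsum]
    have hharm : ∑ n ∈ Finset.range M, ((n:ℝ)+1)⁻¹ = (harmonic M : ℝ) := by
      rw [harmonic]
      push_cast
      rfl
    have hharm2 : (harmonic M : ℝ) ≤ 1 + Real.log (1+2*r) := by
      refine (harmonic_le_one_add_log M).trans ?_
      rcases Nat.eq_zero_or_pos M with hM0 | hM0
      · simp [hM0]
        exact hlog
      · have hMr : (M:ℝ) ≤ 1 + 2*r := by
          have := Nat.floor_le (by linarith : (0:ℝ) ≤ 2*r)
          rw [hM] at *
          linarith
        have : Real.log M ≤ Real.log (1+2*r) :=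
          Real.log_le_log (by exact_mod_cast hM0) hMr
        linarith
    have hMle : (M:ℝ) ≤ 2*r := Nat.floor_le (by linarith)
    have hnn : 0 ≤ (harmonic M : ℝ) := by
      rw [← hharm]; exact Finset.sum_nonneg fun i _ => by positivity
    rw [hharm]
    have h2r : 2*r*(M:ℝ) ≤ 4*r^2 := by nlinarith [Nat.cast_nonneg (α := ℝ) M]
    nlinarith [sq_nonneg r]
  linarith

lemma barnesProd_norm_le (z : ℂ) :
    ‖barnesProd z‖
      ≤ Real.exp (4*‖z‖^2 + ‖z‖^2/2*(1 + Real.log (1+2*‖z‖)) + (‖z‖^2 + 2)) := by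
  have hr : (0:ℝ) ≤ ‖z‖ := norm_nonneg z
  have hlog : 0 ≤ Real.log (1+2*‖z‖) := Real.log_nonneg (by linarith)
  set f : ℕ → ℂ := fun n =>
    (1 + z / (n + 1)) ^ (n + 1) * Complex.exp (-z + z ^ 2 / (2 * ((n : ℂ) + 1))) with hf
  rw [barnesProd]
  by_cases hmul : Multipliable f
  · refine le_of_tendsto' hmul.hasProd.norm (fun s => ?_)
    refine le_trans (Finset.prod_le_prod (fun i _ => norm_nonneg _)
      (fun i _ => barnesTerm_norm_le z i)) ?_
    rw [← Real.exp_sum]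
    exact Real.exp_le_exp.2 (barnesU_sum_le ‖z‖ hr s)
  · rw [show (∏' n : ℕ, (1 + z / (n + 1)) ^ (n + 1)
        * Complex.exp (-z + z ^ 2 / (2 * ((n : ℂ) + 1)))) = ∏' n, f n from rfl,
      tprod_eq_one_of_not_multipliable hmul, norm_one]
    exact Real.one_le_exp (by nlinarith)

lemma barnesG1_norm_le (z : ℂ) :
    ‖barnesG1 z‖ ≤ Real.exp (10 * (1 + ‖z‖^2 * (1 + Real.log (1+2*‖z‖)))) := by
  have hr : (0:ℝ) ≤ ‖z‖ := norm_nonneg z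
  have hlog : 0 ≤ Real.log (1+2*‖z‖) := Real.log_nonneg (by linarith)
  have p1 : ‖(2 * Real.pi : ℂ) ^ (z / 2)‖ ≤ Real.exp ‖z‖ := by
    have hb : (2 * Real.pi : ℂ) = ((2 * Real.pi : ℝ) : ℂ) := by push_cast; ring
    rw [hb, Complex.norm_cpow_eq_rpow_re_of_pos Real.two_pi_pos,
      show (2:ℂ) = ((2:ℝ):ℂ) by norm_num, Complex.div_ofReal_re,
      Real.rpow_def_of_pos Real.two_pi_pos]
    apply Real.exp_le_exp.2
    have h1 : Real.log (2*Real.pi) ≤ 2 := by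
      rw [Real.log_le_iff_le_exp Real.two_pi_pos, show (2:ℝ) = 1+1 by norm_num, Real.exp_add]
      nlinarith [Real.exp_one_gt_d9, Real.pi_lt_d2]
    have h2 : 0 ≤ Real.log (2*Real.pi) := Real.log_nonneg (by nlinarith [Real.pi_gt_three])
    have h3 : |z.re| ≤ ‖z‖ := by exact Complex.abs_re_le_norm z
    calc Real.log (2*Real.pi) * (z.re / 2) ≤ Real.log (2*Real.pi) * (|z.re| / 2) := by
          apply mul_le_mul_of_nonneg_left _ h2
          have := le_abs_self z.re
          linarith
      _ ≤ 2 * (‖z‖ / 2) := by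
          apply mul_le_mul h1 (by linarith) (by positivity) (by norm_num)
      _ = ‖z‖ := by ring
  have p2 : ‖Complex.exp (-(((1 + (Real.eulerMascheroniConstant : ℂ)) * z ^ 2 + z) / 2))‖
      ≤ Real.exp (‖z‖^2 + ‖z‖/2) := by
    rw [Complex.norm_exp]
    apply Real.exp_le_exp.2
    have hg : ‖(1 + (Real.eulerMascheroniConstant : ℂ))‖ ≤ 2 := by
      rw [show (1 + (Real.eulerMascheroniConstant : ℂ))
          = ((1 + Real.eulerMascheroniConstant : ℝ) : ℂ) by push_cast; ring,
        Complex.norm_real, Real.norm_eq_abs, _root_.abs_of_nonneg (by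
          nlinarith [Real.one_half_lt_eulerMascheroniConstant])]
      nlinarith [Real.eulerMascheroniConstant_lt_two_thirds]
    calc (-(((1 + (Real.eulerMascheroniConstant : ℂ)) * z ^ 2 + z) / 2)).re
        ≤ ‖-(((1 + (Real.eulerMascheroniConstant : ℂ)) * z ^ 2 + z) / 2)‖ := by
          exact Complex.re_le_norm _
      _ = ‖(1 + (Real.eulerMascheroniConstant : ℂ)) * z ^ 2 + z‖ / 2 := by
          rw [norm_neg, norm_div]
          norm_num
      _ ≤ (2 * ‖z‖^2 + ‖z‖) / 2 := by
          have := norm_add_le ((1 + (Real.eulerMascheroniConstant : ℂ)) * z ^ 2) z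
          have h2 : ‖(1 + (Real.eulerMascheroniConstant : ℂ)) * z ^ 2‖ ≤ 2 * ‖z‖^2 := by
            rw [norm_mul, norm_pow]
            apply mul_le_mul_of_nonneg_right hg (by positivity)
          linarith
      _ = ‖z‖^2 + ‖z‖/2 := by ring
  have p3 := barnesProd_norm_le z
  rw [barnesG1, norm_mul, norm_mul]
  calc ‖(2 * Real.pi : ℂ) ^ (z / 2)‖
        * ‖Complex.exp (-(((1 + (Real.eulerMascheroniConstant : ℂ)) * z ^ 2 + z) / 2))‖
        * ‖barnesProd z‖
      ≤ Real.exp ‖z‖ * Real.exp (‖z‖^2 + ‖z‖/2)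
        * Real.exp (4*‖z‖^2 + ‖z‖^2/2*(1 + Real.log (1+2*‖z‖)) + (‖z‖^2 + 2)) := by
        apply mul_le_mul (mul_le_mul p1 p2 (norm_nonneg _) (Real.exp_pos _).le) p3
          (norm_nonneg _) (by positivity)
    _ = Real.exp (‖z‖ + (‖z‖^2 + ‖z‖/2)
        + (4*‖z‖^2 + ‖z‖^2/2*(1 + Real.log (1+2*‖z‖)) + (‖z‖^2 + 2))) := by
        rw [← Real.exp_add, ← Real.exp_add]
    _ ≤ Real.exp (10 * (1 + ‖z‖^2 * (1 + Real.log (1+2*‖z‖)))) := by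
        apply Real.exp_le_exp.2
        nlinarith [sq_nonneg ‖z‖, mul_nonneg (mul_nonneg hr hr) hlog]

/-- The Barnes double Gamma function has order at most two: for every `ε > 0` there is
`C > 0` with `|G(z+1)| ≤ C exp(|z|^{2+ε})` for all `z ∈ ℂ`. -/
theorem barnesG_order_le_two :
    ∀ ε : ℝ, 0 < ε → ∃ C : ℝ, 0 < C ∧
      ∀ z : ℂ, ‖barnesG1 z‖ ≤ C * Real.exp (‖z‖ ^ (2 + ε)) := by
  intro ε hε
  set δ := min ε 1 with hδdef
  have hδ : 0 < δ := lt_min hε one_pos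
  have hδ1 : δ ≤ 1 := min_le_right _ _
  have hδε : δ ≤ ε := min_le_left _ _
  set R : ℝ := max 1 ((80/δ) ^ (2/δ)) with hRdef
  have hR1 : (1:ℝ) ≤ R := le_max_left _ _
  have hlogR : 0 ≤ Real.log (1+2*R) := Real.log_nonneg (by linarith)
  set B := 10 * (1 + R^2*(1 + Real.log (1+2*R))) with hBdef
  have hB0 : 0 < B := by nlinarith
  refine ⟨Real.exp B, Real.exp_pos _, fun z => ?_⟩
  have hr : (0:ℝ) ≤ ‖z‖ := norm_nonneg z
  have hlog : 0 ≤ Real.log (1+2*‖z‖) := Real.log_nonneg (by linarith)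
  have hmain := barnesG1_norm_le z
  have hrp : 0 ≤ ‖z‖ ^ (2+ε) := Real.rpow_nonneg hr _
  rcases le_or_gt ‖z‖ R with hcase | hcase
  · have hloglog : Real.log (1+2*‖z‖) ≤ Real.log (1+2*R) :=
      Real.log_le_log (by linarith) (by linarith)
    have h2 : ‖z‖^2*(1+Real.log (1+2*‖z‖)) ≤ R^2*(1+Real.log (1+2*R)) :=
      mul_le_mul (pow_le_pow_left₀ hr hcase 2) (by linarith) (by linarith) (by positivity)
    have hmono : 10 * (1 + ‖z‖^2*(1 + Real.log (1+2*‖z‖))) ≤ B := by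
      rw [hBdef]; linarith
    calc ‖barnesG1 z‖ ≤ Real.exp B := hmain.trans (Real.exp_le_exp.2 hmono)
      _ ≤ Real.exp B * Real.exp (‖z‖^(2+ε)) :=
          le_mul_of_one_le_right (Real.exp_pos _).le (Real.one_le_exp hrp)
  · set r := ‖z‖ with hrdef
    have h1R : (1:ℝ) ≤ r := hR1.trans hcase.le
    have hrpos : (0:ℝ) < r := by linarith
    have hrd : (1:ℝ) ≤ r^(δ/2) := by
      have := Real.rpow_le_rpow_of_exponent_le h1R (show (0:ℝ) ≤ δ/2 by positivity)
      rwa [Real.rpow_zero] at this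
    have hL : Real.log (1+2*r) ≤ 6 * r^(δ/2) / δ := by
      have h1 : Real.log (1+2*r) ≤ (1+2*r)^(δ/2) / (δ/2) :=
        Real.log_le_rpow_div (by linarith) (by positivity)
      have h2 : (1+2*r)^(δ/2) ≤ (3*r)^(δ/2) :=
        Real.rpow_le_rpow (by linarith) (by linarith) (by positivity)
      have h3 : (3*r)^(δ/2) = (3:ℝ)^(δ/2) * r^(δ/2) := Real.mul_rpow (by norm_num) hr
      have h4 : (3:ℝ)^(δ/2) ≤ 3 := by
        calc (3:ℝ)^(δ/2) ≤ (3:ℝ)^(1:ℝ) :=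
              Real.rpow_le_rpow_of_exponent_le (by norm_num) (by linarith)
          _ = 3 := Real.rpow_one 3
      have h5 : (1+2*r)^(δ/2) ≤ 3 * r^(δ/2) := by
        rw [h3] at h2
        exact h2.trans (mul_le_mul_of_nonneg_right h4 (Real.rpow_nonneg hr _))
      calc Real.log (1+2*r) ≤ (1+2*r)^(δ/2)/(δ/2) := h1
        _ ≤ (3*r^(δ/2))/(δ/2) := by gcongr
        _ = 6*r^(δ/2)/δ := by field_simp; ring
    have e1 : r^2 * r^(δ/2) = r^(2+δ/2) := by
      rw [← Real.rpow_natCast r 2, ← Real.rpow_add hrpos]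
      norm_num
    have hr2 : (1:ℝ) ≤ r^2 := one_le_pow₀ h1R
    have hmul : r^2 * Real.log (1+2*r) ≤ r^2 * (6*r^(δ/2)/δ) :=
      mul_le_mul_of_nonneg_left hL (by positivity)
    have h10 : 10*(1+r^2*(1+Real.log (1+2*r))) ≤ 20*r^2 + (60/δ)*(r^2*r^(δ/2)) := by
      calc 10*(1+r^2*(1+Real.log (1+2*r)))
          = 10 + 10*r^2 + 10*(r^2*Real.log (1+2*r)) := by ring
        _ ≤ 20*r^2 + 10*(r^2*(6*r^(δ/2)/δ)) := by linarith
        _ = 20*r^2 + (60/δ)*(r^2*r^(δ/2)) := by ring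
    have h20 : 20*r^2 + (60/δ)*(r^2*r^(δ/2)) ≤ (80/δ)*r^(2+δ/2) := by
      have h2' : r^2 ≤ r^2*r^(δ/2) := le_mul_of_one_le_right (by positivity) hrd
      have h4' : 20*(r^2*r^(δ/2)) ≤ (20/δ)*(r^2*r^(δ/2)) := by
        apply mul_le_mul_of_nonneg_right _ (by positivity)
        rw [le_div_iff₀ hδ]; nlinarith
      calc 20*r^2 + (60/δ)*(r^2*r^(δ/2))
          ≤ (20/δ)*(r^2*r^(δ/2)) + (60/δ)*(r^2*r^(δ/2)) := by linarith
        _ = (80/δ)*(r^2*r^(δ/2)) := by ring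
        _ = (80/δ)*r^(2+δ/2) := by rw [e1]
    have h80 : (80/δ) ≤ r^(δ/2) := by
      have hRle : (80/δ)^(2/δ) ≤ r := (le_max_right _ _).trans hcase.le
      have h0 : (0:ℝ) ≤ 80/δ := by positivity
      have hstep := Real.rpow_le_rpow (Real.rpow_nonneg h0 _) hRle
        (by positivity : (0:ℝ) ≤ δ/2)
      rwa [← Real.rpow_mul h0, show (2/δ)*(δ/2) = 1 by field_simp, Real.rpow_one] at hstep
    have hfin : (80/δ)*r^(2+δ/2) ≤ r^(2+ε) := by
      calc (80/δ)*r^(2+δ/2) ≤ r^(δ/2)*r^(2+δ/2) :=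
            mul_le_mul_of_nonneg_right h80 (Real.rpow_nonneg hr _)
        _ = r^(2+δ) := by rw [← Real.rpow_add hrpos]; ring_nf
        _ ≤ r^(2+ε) := Real.rpow_le_rpow_of_exponent_le h1R (by linarith)
    have key : 10*(1+r^2*(1+Real.log (1+2*r))) ≤ r^(2+ε) := by linarith
    calc ‖barnesG1 z‖ ≤ Real.exp (r^(2+ε)) := hmain.trans (Real.exp_le_exp.2 key)
      _ ≤ Real.exp B * Real.exp (r^(2+ε)) :=
          le_mul_of_one_le_left (Real.exp_pos _).le (Real.one_le_exp hB0.le)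
end

section
/- The function φ(s) = √π · Γ(s − 1/2) ζ(2s − 1) / ( Γ(s) ζ(2s) ) tends to −1 as s → 1/2 with s ≠ 1/2; that is, the limit of √π Γ(s−1/2) ζ(2s−1) / (Γ(s) ζ(2s)) along the punctured neighborhood filter at s = 1/2 equals −1. -/
/-!
Writing `Γ(s - 1/2) = Γ(s + 1/2) / (s - 1/2)` trades the pole of `Γ` at `0` for the factor
`2 / (2s - 1)`, which pairs with `ζ(2s)` into `(2s - 1) ζ(2s) → 1` (the residue of `ζ` at `1`).
What remains is continuous at `s = 1/2`, and the limit is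
`√π Γ(1) · 2ζ(0) / Γ(1/2) = √π · 2 · (-1/2) / √π = -1`.
-/

open Complex Filter Topology

lemma tendsto_const_mul_nhdsNE {G₀ : Type*} [GroupWithZero G₀] [TopologicalSpace G₀]
    [SeparatelyContinuousMul G₀] {c : G₀} (hc : c ≠ 0) (a : G₀) :
    Tendsto (c * ·) (𝓝[≠] a) (𝓝[≠] (c * a)) :=
  ((Homeomorph.mulLeft₀ c hc).map_punctured_nhds_eq a).le

lemma tendsto_sub_one_mul_riemannZeta_const_mul {c : ℂ} (hc : c ≠ 0) :
    Tendsto (fun s ↦ (c * s - 1) * riemannZeta (c * s)) (𝓝[≠] c⁻¹) (𝓝 1) := by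
  have hmul := tendsto_const_mul_nhdsNE hc c⁻¹
  rw [mul_inv_cancel₀ hc] at hmul
  exact riemannZeta_residue_one.comp hmul

lemma Complex.continuousAt_Gamma_of_re_pos {s : ℂ} (hs : 0 < s.re) : ContinuousAt Gamma s :=
  (differentiableAt_Gamma s fun m hm ↦ by
    have := congrArg re hm
    simp only [neg_re, natCast_re] at this
    linarith [m.cast_nonneg (α := ℝ)]).continuousAt

lemma Complex.Gamma_one_half_eq_sqrt_pi : Gamma (1 / 2) = (Real.sqrt Real.pi : ℂ) := by
  rw [← Real.Gamma_one_half_eq, ← Gamma_ofReal]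
  norm_num

lemma scattering_eq_of_ne_half {s : ℂ} (hs : s ≠ 1 / 2) :
    (Real.sqrt Real.pi : ℂ) * Gamma (s - 1 / 2) * riemannZeta (2 * s - 1) /
        (Gamma s * riemannZeta (2 * s)) =
      (Real.sqrt Real.pi : ℂ) * Gamma (s + 1 / 2) * (2 * riemannZeta (2 * s - 1)) /
        (Gamma s * ((2 * s - 1) * riemannZeta (2 * s))) := by
  have h2s : (2 * s - 1 : ℂ) ≠ 0 := by
    contrapose! hs
    linear_combination hs / 2
  rw [show s + 1 / 2 = s - 1 / 2 + 1 by ring, Gamma_add_one _ (sub_ne_zero.mpr hs),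
    ← mul_div_mul_left _ _ h2s]
  ring_nf

/-- The scattering determinant `φ(s) = √π Γ(s−1/2) ζ(2s−1) / (Γ(s) ζ(2s))` of the modular
group tends to `−1` as `s → 1/2`, `s ≠ 1/2`. -/
theorem modular_scattering_at_half :
    Filter.Tendsto
      (fun s : ℂ => (Real.sqrt Real.pi : ℂ) * Complex.Gamma (s - 1 / 2) *
        riemannZeta (2 * s - 1) / (Complex.Gamma s * riemannZeta (2 * s)))
      (nhdsWithin (1 / 2 : ℂ) {(1 / 2 : ℂ)}ᶜ) (nhds (-1)) := by
  have hnum : Tendsto (fun s : ℂ ↦ (Real.sqrt Real.pi : ℂ) * Gamma (s + 1 / 2) *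
      (2 * riemannZeta (2 * s - 1))) (𝓝 (1 / 2)) (𝓝 (-Real.sqrt Real.pi)) := by
    have hGamma : ContinuousAt (fun s : ℂ ↦ Gamma (s + 1 / 2)) (1 / 2) :=
      ContinuousAt.comp (g := Gamma) (continuousAt_Gamma_of_re_pos (by norm_num)) (by fun_prop)
    have hzeta : ContinuousAt (fun s : ℂ ↦ riemannZeta (2 * s - 1)) (1 / 2) :=
      ContinuousAt.comp (g := riemannZeta)
        (differentiableAt_riemannZeta (by norm_num)).continuousAt (by fun_prop)
    convert ((continuousAt_const (y := (Real.sqrt Real.pi : ℂ))).mul hGamma).mul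
      ((continuousAt_const (y := (2 : ℂ))).mul hzeta) |>.tendsto using 2
    simp only [Pi.mul_apply]
    norm_num [Gamma_one, riemannZeta_zero]
  have hden : Tendsto (fun s : ℂ ↦ Gamma s * ((2 * s - 1) * riemannZeta (2 * s)))
      (𝓝[≠] (1 / 2)) (𝓝 (Real.sqrt Real.pi)) := by
    have hGamma := (continuousAt_Gamma_of_re_pos (s := 1 / 2) (by norm_num)).tendsto
    rw [Gamma_one_half_eq_sqrt_pi] at hGamma
    have hzeta := tendsto_sub_one_mul_riemannZeta_const_mul (two_ne_zero' ℂ)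
    rw [← one_div] at hzeta
    simpa using (hGamma.mono_left nhdsWithin_le_nhds).mul hzeta
  have hsqrt : (Real.sqrt Real.pi : ℂ) ≠ 0 := by
    exact_mod_cast (Real.sqrt_pos.mpr Real.pi_pos).ne'
  have hlim := (hnum.mono_left nhdsWithin_le_nhds).div hden hsqrt
  rw [neg_div_self hsqrt] at hlim
  exact hlim.congr' (eventually_nhdsWithin_of_forall fun s hs ↦ (scattering_eq_of_ne_half hs).symm)
end

section
/- Let N > 1 be a squarefree positive integer with exactly r distinct prime factors. Then the function φ_{N,0}(s) = [ √π Γ(s−1/2) ζ(2s−1) / ( Γ(s) ζ(2s) ) ]^{2^r} · ∏_{p | N} ( (1 − p^{2−2s}) / (1 − p^{2s}) )^{2^{r−1}} tends to 1 as s → 1/2 with s ≠ 1/2. -/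
open Complex Filter

lemma sqrt_pi_complex : ((Real.sqrt Real.pi : ℝ) : ℂ) = Complex.Gamma (1 / 2) := by
  rw [Complex.Gamma_one_half_eq, Real.sqrt_eq_rpow,
    Complex.ofReal_cpow Real.pi_pos.le]
  norm_num

lemma sqrt_pi_ne : ((Real.sqrt Real.pi : ℝ) : ℂ) ≠ 0 := by
  simpa [Complex.ofReal_eq_zero] using
    (Real.sqrt_ne_zero'.mpr Real.pi_pos)

lemma bracket_tendsto :
    Tendsto (fun s : ℂ =>
        (Real.sqrt Real.pi : ℂ) * Complex.Gamma (s - 1 / 2) * riemannZeta (2 * s - 1) /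
          (Complex.Gamma s * riemannZeta (2 * s)))
      (nhdsWithin (1 / 2 : ℂ) {(1 / 2 : ℂ)}ᶜ) (nhds (-1)) := by
  have hle := (nhdsWithin_le_nhds : nhdsWithin (1/2:ℂ) {(1/2:ℂ)}ᶜ ≤ nhds (1/2))
  have h2s : Tendsto (fun s : ℂ => 2 * s) (nhdsWithin (1/2) {(1/2:ℂ)}ᶜ)
      (nhdsWithin 1 {(1:ℂ)}ᶜ) := by
    rw [nhdsWithin, nhdsWithin, Filter.tendsto_inf]
    constructor
    · have h := ((continuous_mul_left (2:ℂ)).tendsto (1/2 : ℂ)).mono_left hle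
      convert h using 2
      · rfl
      · norm_num
    · rw [tendsto_principal]
      filter_upwards [self_mem_nhdsWithin] with s hs
      simp only [Set.mem_compl_iff, Set.mem_singleton_iff] at hs ⊢
      intro h
      exact hs (by linear_combination h / 2)
  have hres : Tendsto (fun s : ℂ => (2 * s - 1) * riemannZeta (2 * s))
      (nhdsWithin (1/2) {(1/2:ℂ)}ᶜ) (nhds 1) := riemannZeta_residue_one.comp h2s
  have hG1 : Tendsto (fun s : ℂ => Complex.Gamma (s + 1/2))
      (nhdsWithin (1/2) {(1/2:ℂ)}ᶜ) (nhds 1) := by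
    have hd : ContinuousAt Complex.Gamma (1:ℂ) := by
      refine (Complex.differentiableAt_Gamma _ fun m => ?_).continuousAt
      intro h
      have := congrArg Complex.re h
      simp at this
      nlinarith [Nat.cast_nonneg (α := ℝ) m]
    have hinner : Tendsto (fun s : ℂ => s + 1/2) (nhds (1/2:ℂ)) (nhds 1) := by
      have hcont : Continuous (fun s : ℂ => s + 1/2) := by continuity
      have := hcont.tendsto (1/2:ℂ)
      norm_num at this
      exact this
    have := (hd.tendsto.comp hinner).mono_left hle
    simpa [Function.comp_def, Complex.Gamma_one] using this
  have hGhalf : Tendsto (fun s : ℂ => Complex.Gamma s)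
      (nhdsWithin (1/2) {(1/2:ℂ)}ᶜ) (nhds ((Real.sqrt Real.pi : ℝ) : ℂ)) := by
    have hd : ContinuousAt Complex.Gamma (1/2 : ℂ) := by
      refine (Complex.differentiableAt_Gamma _ fun m => ?_).continuousAt
      intro h
      have := congrArg Complex.re h
      simp at this
      nlinarith [Nat.cast_nonneg (α := ℝ) m]
    have := hd.tendsto.mono_left hle
    rw [← sqrt_pi_complex] at this
    exact this
  have hzeta0 : Tendsto (fun s : ℂ => riemannZeta (2 * s - 1))
      (nhdsWithin (1/2) {(1/2:ℂ)}ᶜ) (nhds (-1/2)) := by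
    have hd : ContinuousAt riemannZeta (0:ℂ) :=
      (differentiableAt_riemannZeta (by norm_num)).continuousAt
    have hinner : Tendsto (fun s : ℂ => 2 * s - 1) (nhds (1/2:ℂ)) (nhds 0) := by
      have hcont : Continuous (fun s : ℂ => 2 * s - 1) := by continuity
      have := hcont.tendsto (1/2:ℂ)
      norm_num at this
      exact this
    have := (hd.tendsto.comp hinner).mono_left hle
    simpa [Function.comp_def, riemannZeta_zero] using this
  -- the modified expression
  have hF : Tendsto (fun s : ℂ =>
      (2 * s - 1) * ((Real.sqrt Real.pi : ℂ) * Complex.Gamma (s - 1/2) * riemannZeta (2*s-1))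
        / ((2 * s - 1) * (Complex.Gamma s * riemannZeta (2 * s))))
      (nhdsWithin (1/2) {(1/2:ℂ)}ᶜ) (nhds (-1)) := by
    have key : Tendsto (fun s : ℂ =>
        ((Real.sqrt Real.pi : ℂ) * (2 * Complex.Gamma (s + 1/2)) * riemannZeta (2*s-1))
          / (Complex.Gamma s * ((2 * s - 1) * riemannZeta (2 * s))))
        (nhdsWithin (1/2) {(1/2:ℂ)}ᶜ) (nhds (-1)) := by
      have num : Tendsto (fun s : ℂ =>
          (Real.sqrt Real.pi : ℂ) * (2 * Complex.Gamma (s + 1/2)) * riemannZeta (2*s-1))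
          (nhdsWithin (1/2) {(1/2:ℂ)}ᶜ)
          (nhds ((Real.sqrt Real.pi : ℂ) * (2 * 1) * (-1/2))) :=
        (tendsto_const_nhds.mul (tendsto_const_nhds.mul hG1)).mul hzeta0
      have den : Tendsto (fun s : ℂ => Complex.Gamma s * ((2 * s - 1) * riemannZeta (2 * s)))
          (nhdsWithin (1/2) {(1/2:ℂ)}ᶜ)
          (nhds (((Real.sqrt Real.pi : ℝ) : ℂ) * 1)) := hGhalf.mul hres
      have := num.div den (by simpa using sqrt_pi_ne)
      convert this using 2
      · rfl
      field_simp [sqrt_pi_ne]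
    refine key.congr' ?_
    filter_upwards [self_mem_nhdsWithin] with s hs
    simp only [Set.mem_compl_iff, Set.mem_singleton_iff] at hs
    have hsne : s - 1/2 ≠ 0 := sub_ne_zero.mpr hs
    have hGam : Complex.Gamma (s + 1/2) = (s - 1/2) * Complex.Gamma (s - 1/2) := by
      have := Complex.Gamma_add_one (s - 1/2) hsne
      rw [← this]
      ring_nf
    rw [hGam]
    ring_nf
  -- cancel the common factor
  refine hF.congr' ?_
  filter_upwards [self_mem_nhdsWithin] with s hs
  simp only [Set.mem_compl_iff, Set.mem_singleton_iff] at hs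
  have hc : (2 * s - 1 : ℂ) ≠ 0 := by
    intro h
    exact hs (by linear_combination h / 2)
  rw [mul_div_mul_left _ _ hc]

/-- For squarefree `N > 1` with `r` distinct prime factors, the scattering determinant of
`Γ₀(N)`,
`φ_{N,0}(s) = [√π Γ(s−1/2) ζ(2s−1)/(Γ(s)ζ(2s))]^{2^r} ∏_{p∣N} ((1−p^{2−2s})/(1−p^{2s}))^{2^{r−1}}`,
tends to `1` as `s → 1/2`, `s ≠ 1/2`. -/
theorem congruence_scattering_at_half (N : ℕ) (hN : 1 < N) (hsf : Squarefree N)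
    (r : ℕ) (hr : r = N.primeFactors.card) :
    Filter.Tendsto
      (fun s : ℂ =>
        ((Real.sqrt Real.pi : ℂ) * Complex.Gamma (s - 1 / 2) * riemannZeta (2 * s - 1) /
            (Complex.Gamma s * riemannZeta (2 * s))) ^ (2 ^ r) *
          ∏ p ∈ N.primeFactors,
            ((1 - (p : ℂ) ^ (2 - 2 * s)) / (1 - (p : ℂ) ^ (2 * s))) ^ (2 ^ (r - 1)))
      (nhdsWithin (1 / 2 : ℂ) {(1 / 2 : ℂ)}ᶜ) (nhds 1) := by
  have hr1 : 1 ≤ r := by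
    rw [hr]
    exact Finset.card_pos.mpr (Nat.nonempty_primeFactors.mpr hN)
  have hle := (nhdsWithin_le_nhds : nhdsWithin (1/2:ℂ) {(1/2:ℂ)}ᶜ ≤ nhds (1/2))
  -- the bracket part
  have h1 : Tendsto (fun s : ℂ =>
      ((Real.sqrt Real.pi : ℂ) * Complex.Gamma (s - 1 / 2) * riemannZeta (2 * s - 1) /
        (Complex.Gamma s * riemannZeta (2 * s))) ^ (2 ^ r))
      (nhdsWithin (1 / 2 : ℂ) {(1 / 2 : ℂ)}ᶜ) (nhds 1) := by
    have := bracket_tendsto.pow (2 ^ r)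
    have hev : Even (2 ^ r) := by
      refine ⟨2 ^ (r - 1), ?_⟩
      have h2 : 2 ^ r = 2 * 2 ^ (r - 1) := by
        rw [← pow_succ']
        congr 1
        omega
      rw [h2]; ring
    rwa [Even.neg_one_pow hev] at this
  -- the product part
  have h2 : Tendsto (fun s : ℂ =>
      ∏ p ∈ N.primeFactors,
        ((1 - (p : ℂ) ^ (2 - 2 * s)) / (1 - (p : ℂ) ^ (2 * s))) ^ (2 ^ (r - 1)))
      (nhdsWithin (1 / 2 : ℂ) {(1 / 2 : ℂ)}ᶜ) (nhds 1) := by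
    have := tendsto_finset_prod (f := fun (p : ℕ) (s : ℂ) =>
        ((1 - (p : ℂ) ^ (2 - 2 * s)) / (1 - (p : ℂ) ^ (2 * s))) ^ (2 ^ (r - 1)))
        (x := nhdsWithin (1/2 : ℂ) {(1/2:ℂ)}ᶜ) (a := fun _ => 1) N.primeFactors ?_
    · simpa using this
    intro p hp
    have hpp : p.Prime := Nat.prime_of_mem_primeFactors hp
    have hp0 : (p : ℂ) ≠ 0 := Nat.cast_ne_zero.mpr hpp.pos.ne'
    have hp1 : (1 : ℂ) - (p : ℂ) ≠ 0 := by
      intro h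
      have : (p : ℂ) = 1 := by linear_combination -h
      exact hpp.one_lt.ne' (by exact_mod_cast this)
    have hnum : Tendsto (fun s : ℂ => 1 - (p : ℂ) ^ (2 - 2 * s))
        (nhdsWithin (1/2) {(1/2:ℂ)}ᶜ) (nhds (1 - (p:ℂ))) := by
      have hcont : Continuous (fun s : ℂ => 1 - (p : ℂ) ^ (2 - 2 * s)) :=
        continuous_const.sub ((by continuity : Continuous (fun s : ℂ => 2 - 2 * s)).const_cpow
          (Or.inl hp0))
      have := (hcont.tendsto (1/2:ℂ)).mono_left hle
      norm_num at this
      simpa [Complex.cpow_one] using this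
    have hden : Tendsto (fun s : ℂ => 1 - (p : ℂ) ^ (2 * s))
        (nhdsWithin (1/2) {(1/2:ℂ)}ᶜ) (nhds (1 - (p:ℂ))) := by
      have hcont : Continuous (fun s : ℂ => 1 - (p : ℂ) ^ (2 * s)) :=
        continuous_const.sub ((by continuity : Continuous (fun s : ℂ => 2 * s)).const_cpow
          (Or.inl hp0))
      have := (hcont.tendsto (1/2:ℂ)).mono_left hle
      norm_num at this
      simpa [Complex.cpow_one] using this
    have := ((hnum.div hden hp1).pow (2 ^ (r - 1)))
    rwa [div_self hp1, one_pow] at this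
  have := h1.mul h2
  rwa [one_mul] at this
end
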